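/- If G is a generalized geodetic graph (i.e., g(G) = sg(G)), then for every connected graph H, sg(G □ H) ≥ sg(G). -/

import Mathlib

open SimpleGraph

/-- A choice of one fixed shortest path (geodesic) between each pair of vertices,
symmetric in the sense that the path from `v` to `u` is the reverse of the one
from `u` to `v`. -/
def StrongGeodeticChoice {V : Type*} (G : SimpleGraph V) (p : ∀ u v : V, G.Walk u v) : Prop :=
  ∀ u v : V, (p u v).IsPath ∧ (p u v).length = G.dist u v ∧ p v u = (p u v).reverse

/-- `S` is a strong geodetic set of `G`: one can fix one shortest path between each
pair of vertices of `S` so that every vertex of `G` lies on some fixed path. -/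
def IsStrongGeodeticSet {V : Type*} (G : SimpleGraph V) (S : Set V) : Prop :=
  ∃ p : ∀ u v : V, G.Walk u v, StrongGeodeticChoice G p ∧
    ∀ w : V, ∃ u ∈ S, ∃ v ∈ S, w ∈ (p u v).support

/-- The strong geodetic number of `G`. -/
noncomputable def sg {V : Type*} (G : SimpleGraph V) : ℕ :=
  sInf {n | ∃ S : Set V, S.ncard = n ∧ IsStrongGeodeticSet G S}

/-- The strong geodetic core number of `G`: the minimum, over minimum strong
geodetic sets `S` together with a choice of fixed geodesics witnessing them,
of the size of a subset `X ⊆ S` such that the fixed paths with an endpoint in `X`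
already cover all vertices. -/
noncomputable def sgc {V : Type*} (G : SimpleGraph V) : ℕ :=
  sInf {k | ∃ (S X : Set V) (p : ∀ u v : V, G.Walk u v),
    StrongGeodeticChoice G p ∧ S.ncard = sg G ∧
    (∀ w : V, ∃ u ∈ S, ∃ v ∈ S, w ∈ (p u v).support) ∧
    X ⊆ S ∧ X.ncard = k ∧
    (∀ w : V, ∃ u ∈ X, ∃ v ∈ S, w ∈ (p u v).support)}

/-- `A` is a geodetic set: every vertex lies on some shortest path between two
vertices of `A`. -/
def IsGeodeticSet {V : Type*} (G : SimpleGraph V) (A : Set V) : Prop :=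
  ∀ w : V, ∃ u ∈ A, ∃ v ∈ A, ∃ q : G.Walk u v, q.length = G.dist u v ∧ w ∈ q.support

/-- The geodetic number of `G`. -/
noncomputable def geodeticNumber {V : Type*} (G : SimpleGraph V) : ℕ :=
  sInf {n | ∃ A : Set V, A.ncard = n ∧ IsGeodeticSet G A}

/-!
Distances add in a Cartesian product, so the projection onto `G` of a geodesic of `G □ H` is a
geodesic of `G`. Hence projecting a strong geodetic set `S` of `G □ H` onto `G` yields a geodetic
set of `G` of size at most `|S|`, giving `g(G) ≤ sg(G □ H)`; and `g(G) = sg(G)`.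
-/

namespace SimpleGraph

variable {α β : Type*} {G : SimpleGraph α} {H : SimpleGraph β}

lemma Walk.fst_mem_support_ofBoxProdLeft [DecidableEq β] [DecidableRel G.Adj] {x y : α × β}
    (w : (G □ H).Walk x y) {z : α × β} (hz : z ∈ w.support) :
    z.1 ∈ w.ofBoxProdLeft.support := by
  induction w with
  | nil =>
    rw [Walk.support_nil, List.mem_singleton] at hz
    simp [hz, ofBoxProdLeft]
  | @cons x x' y h w ih =>
    rw [Walk.support_cons, List.mem_cons] at hz
    unfold ofBoxProdLeft
    rcases h with hG | hH
    · simp only [Or.by_cases, dif_pos hG, support_cons, List.mem_cons]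
      exact hz.imp (congrArg Prod.fst) ih
    · have hnG : ¬(G.Adj x.1 x'.1 ∧ x.2 = x'.2) := fun h => G.irrefl (hH.2 ▸ h.1)
      simp only [Or.by_cases, dif_neg hnG]
      obtain ⟨a, b⟩ := x
      obtain ⟨a', b'⟩ := x'
      obtain rfl : a = a' := hH.2
      rcases hz with rfl | hz
      · exact start_mem_support _
      · exact ih hz

lemma Reachable.dist_boxProd {x y : α × β} (h : (G □ H).Reachable x y) :
    (G □ H).dist x y = G.dist x.1 y.1 + H.dist x.2 y.2 := by
  obtain ⟨hG, hH⟩ := reachable_boxProd.mp h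
  rw [dist, edist_boxProd, ENat.toNat_add (edist_ne_top_iff_reachable.mpr hG)
    (edist_ne_top_iff_reachable.mpr hH), ← dist, ← dist]

lemma Walk.length_ofBoxProdLeft_eq_dist [DecidableEq α] [DecidableEq β] [DecidableRel G.Adj]
    [DecidableRel H.Adj] {x y : α × β} (w : (G □ H).Walk x y)
    (hw : w.length = (G □ H).dist x y) :
    w.ofBoxProdLeft.length = G.dist x.1 y.1 := by
  have hsplit : w.length = w.ofBoxProdLeft.length + w.ofBoxProdRight.length := by
    obtain ⟨a₁, b₁⟩ := x
    obtain ⟨a₂, b₂⟩ := y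
    exact w.length_boxProd
  have hG := dist_le w.ofBoxProdLeft
  have hH := dist_le w.ofBoxProdRight
  rw [Reachable.dist_boxProd ⟨w⟩] at hw
  omega

lemma exists_strongGeodeticChoice (hG : G.Preconnected) :
    ∃ p : ∀ u v : α, G.Walk u v, StrongGeodeticChoice G p := by
  classical
  let _ : LinearOrder α := IsWellOrder.linearOrder WellOrderingRel
  -- Keep a chosen geodesic for `u ≤ v` and use its reverse for `v < u`, which forces symmetry.
  choose q hq using fun u v => (hG u v).exists_walk_length_eq_dist
  have hpath (u v : α) : (q u v).IsPath := Walk.isPath_of_length_eq_dist _ (hq u v)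
  have hnil (u : α) : q u u = Walk.nil :=
    (Walk.length_eq_zero_iff.mp ((hq u u).trans dist_self)).eq_nil
  refine ⟨fun u v => if u ≤ v then q u v else (q v u).reverse, fun u v => ⟨?_, ?_, ?_⟩⟩
  · beta_reduce
    split_ifs
    exacts [hpath u v, (hpath v u).reverse]
  · beta_reduce
    split_ifs
    exacts [hq u v, by rw [Walk.length_reverse, hq, dist_comm]]
  · rcases lt_trichotomy u v with h | rfl | h
    · simp [h.le, not_le.mpr h]
    · simp [hnil]
    · simp [h.le, not_le.mpr h]

lemma isStrongGeodeticSet_univ (hG : G.Preconnected) : IsStrongGeodeticSet G Set.univ :=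
  let ⟨p, hp⟩ := exists_strongGeodeticChoice hG
  ⟨p, hp, fun w => ⟨w, trivial, w, trivial, Walk.start_mem_support _⟩⟩

lemma IsStrongGeodeticSet.isGeodeticSet_image_fst [Nonempty β] {S : Set (α × β)}
    (hS : IsStrongGeodeticSet (G □ H) S) : IsGeodeticSet G (Prod.fst '' S) := by
  classical
  obtain ⟨p, hp, hcover⟩ := hS
  intro a
  obtain ⟨u, hu, v, hv, hmem⟩ := hcover (a, Classical.arbitrary β)
  exact ⟨u.1, ⟨u, hu, rfl⟩, v.1, ⟨v, hv, rfl⟩, (p u v).ofBoxProdLeft,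
    (p u v).length_ofBoxProdLeft_eq_dist (hp u v).2.1,
    (p u v).fst_mem_support_ofBoxProdLeft hmem⟩

lemma geodeticNumber_le_sg_boxProd [Finite α] [Finite β] [Nonempty β]
    (hGH : (G □ H).Preconnected) : geodeticNumber G ≤ sg (G □ H) := by
  refine le_csInf ⟨_, _, rfl, isStrongGeodeticSet_univ hGH⟩ ?_
  rintro _ ⟨S, rfl, hS⟩
  calc geodeticNumber G ≤ (Prod.fst '' S).ncard :=
        Nat.sInf_le ⟨_, rfl, hS.isGeodeticSet_image_fst⟩
    _ ≤ S.ncard := Set.ncard_image_le S.toFinite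

end SimpleGraph

theorem stmt13 {V W : Type*} [Fintype V] [Fintype W]
    (G : SimpleGraph V) (hG : G.Connected) (hgen : geodeticNumber G = sg G)
    (H : SimpleGraph W) (hH : H.Connected) :
    sg (G □ H) ≥ sg G := by
  have := hH.nonempty
  exact hgen ▸ geodeticNumber_le_sg_boxProd (hG.boxProd hH).preconnected
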